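/- arXiv:1612.07960 — 2 statements merged into one kernel-verified Lean document; each statement's English description precedes it below -/
import Mathlib

section
/- Let n ≥ 1, let B be a nondegenerate symmetric ℚ-bilinear form on ℚⁿ, and let Λ_R ⊆ Λ be lattices in ℚⁿ with B(λ,α) ∈ ℤ for all λ ∈ Λ and α ∈ Λ_R. Let ℓ = ℓ₁·ℓ₂ with ℓ₁, ℓ₂ ≥ 1 and gcd(ℓ₁, [Λ_R^B : Λ]) = 1, and let A: Λ → Λ be an additive endomorphism with A(Λ) = Λ ∩ ℓ₂·Λ_R^B and A(Λ_R) = Λ_R ∩ ℓ₂·Λ^B. Then the endomorphism ℓ₁·A satisfies (ℓ₁·A)(Λ) = Λ ∩ ℓ·Λ_R^B and (ℓ₁·A)(Λ_R) = Λ_R ∩ ℓ·Λ^B. -/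
/-!
Put `m = [Λ_R^B : Λ ∩ Λ_R^B]`. Then `m` kills `Λ_R^B` modulo `Λ`, and pairing against `B` turns
this into `m · Λ^B ⊆ Λ_R^{BB} = Λ_R`. As `ℓ₁` is prime to `m`, any `z ∈ Λ_R^B` with `ℓ₁ z ∈ Λ` lies
in `Λ` (Bézout), and likewise for `Λ^B` and `Λ_R`. This saturation is exactly what makes
multiplication by `ℓ₁` map `Λ ∩ ℓ₂ Λ_R^B` onto `Λ ∩ ℓ₁ℓ₂ Λ_R^B`, and similarly for `Λ_R`.
-/

/-- A lattice in `ℚⁿ`: a subgroup generated by a `ℚ`-basis. -/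
def IsLattice {n : ℕ} (L : AddSubgroup (Fin n → ℚ)) : Prop :=
  ∃ b : Module.Basis (Fin n) ℚ (Fin n → ℚ), L = AddSubgroup.closure (Set.range b)

/-- The dual lattice `L^B` of `L` with respect to a bilinear form `B`. -/
def dualLattice {n : ℕ} (B : (Fin n → ℚ) →ₗ[ℚ] (Fin n → ℚ) →ₗ[ℚ] ℚ)
    (L : AddSubgroup (Fin n → ℚ)) : AddSubgroup (Fin n → ℚ) where
  carrier := {x | ∀ y ∈ L, ∃ k : ℤ, B x y = (k : ℚ)}
  zero_mem' := fun y _ => ⟨0, by simp⟩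
  add_mem' := by
    intro a b ha hb y hy
    obtain ⟨k, hk⟩ := ha y hy
    obtain ⟨m, hm⟩ := hb y hy
    exact ⟨k + m, by simp [map_add, hk, hm]⟩
  neg_mem' := by
    intro a ha y hy
    obtain ⟨k, hk⟩ := ha y hy
    exact ⟨-k, by simp [hk]⟩

/-- The lattice `ℓ·L`. -/
def smulLat {n : ℕ} (ℓ : ℕ) (L : AddSubgroup (Fin n → ℚ)) : AddSubgroup (Fin n → ℚ) :=
  L.map (DistribMulAction.toAddMonoidHom (Fin n → ℚ) ((ℓ : ℚ)))

open LinearMap (BilinForm)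

theorem AddSubgroup.mem_of_nsmul_mem_of_coprime {G : Type*} [AddCommGroup G]
    {H : AddSubgroup G} {a b : ℕ} (hab : a.Coprime b) {z : G}
    (ha : a • z ∈ H) (hb : b • z ∈ H) : z ∈ H := by
  obtain ⟨u, v, huv⟩ := Nat.isCoprime_iff_coprime.mpr hab
  have hz : z = u • a • z + v • b • z := by
    rw [← natCast_zsmul, ← natCast_zsmul, ← mul_zsmul, ← mul_zsmul, ← add_zsmul, huv, one_zsmul]
  rw [hz]
  exact add_mem (zsmul_mem ha u) (zsmul_mem hb v)

section Lattices

variable {n : ℕ}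

theorem mem_smulLat {ℓ : ℕ} {L : AddSubgroup (Fin n → ℚ)} {x : Fin n → ℚ} :
    x ∈ smulLat ℓ L ↔ ∃ y ∈ L, (ℓ : ℚ) • y = x :=
  AddSubgroup.mem_map

theorem toIntSubmodule_dualLattice (B : BilinForm ℚ (Fin n → ℚ)) (L : AddSubgroup (Fin n → ℚ)) :
    (dualLattice B L).toIntSubmodule = B.dualSubmodule L.toIntSubmodule := by
  ext x
  show (∀ y ∈ L, ∃ k : ℤ, B x y = k) ↔ ∀ y ∈ L, B x y ∈ (1 : Submodule ℤ ℚ)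
  simp [Submodule.mem_one, eq_comm]

theorem dualLattice_dualLattice {B : BilinForm ℚ (Fin n → ℚ)} (hsymm : B.IsSymm)
    (hnd : B.Nondegenerate) {L : AddSubgroup (Fin n → ℚ)} (hL : IsLattice L) :
    dualLattice B (dualLattice B L) = L := by
  obtain ⟨b, rfl⟩ := hL
  apply AddSubgroup.toIntSubmodule.injective
  rw [toIntSubmodule_dualLattice, toIntSubmodule_dualLattice, AddSubgroup.toIntSubmodule_closure,
    BilinForm.dualSubmodule_dualSubmodule_of_basis B hnd hsymm]

theorem nsmul_mem_dualLattice {B : BilinForm ℚ (Fin n → ℚ)} {L M : AddSubgroup (Fin n → ℚ)}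
    {m : ℕ} (hLM : ∀ y ∈ L, m • y ∈ M) {x : Fin n → ℚ} (hx : x ∈ dualLattice B M) :
    m • x ∈ dualLattice B L := by
  intro y hy
  obtain ⟨k, hk⟩ := hx (m • y) (hLM y hy)
  refine ⟨k, ?_⟩
  rw [← hk, map_nsmul, map_nsmul, LinearMap.smul_apply]

theorem map_nsmul_inf_smulLat {L D : AddSubgroup (Fin n → ℚ)} {ℓ₁ ℓ₂ m : ℕ}
    (hcop : ℓ₁.Coprime m) (hm : ∀ z ∈ D, m • z ∈ L) :
    (L ⊓ smulLat ℓ₂ D).map (DistribMulAction.toAddMonoidHom (Fin n → ℚ) (ℓ₁ : ℚ))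
      = L ⊓ smulLat (ℓ₁ * ℓ₂) D := by
  ext x
  simp only [AddSubgroup.mem_map, AddSubgroup.mem_inf, mem_smulLat,
    DistribMulAction.toAddMonoidHom_apply, Nat.cast_mul, mul_smul]
  constructor
  · rintro ⟨w, ⟨hwL, d, hd, rfl⟩, rfl⟩
    refine ⟨?_, d, hd, rfl⟩
    rw [Nat.cast_smul_eq_nsmul]
    exact nsmul_mem hwL ℓ₁
  · rintro ⟨hxL, d, hd, rfl⟩
    refine ⟨_, ⟨?_, d, hd, rfl⟩, rfl⟩
    rw [Nat.cast_smul_eq_nsmul] at hxL ⊢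
    exact AddSubgroup.mem_of_nsmul_mem_of_coprime hcop hxL (hm _ (nsmul_mem hd ℓ₂))

end Lattices

theorem stmt3_general {n : ℕ}
    (B : (Fin n → ℚ) →ₗ[ℚ] (Fin n → ℚ) →ₗ[ℚ] ℚ)
    (hBsymm : ∀ x y, B x y = B y x)
    (hBnd : ∀ x, (∀ y, B x y = 0) → x = 0)
    (ΛR Λ : AddSubgroup (Fin n → ℚ))
    (hΛR : IsLattice ΛR)
    (ℓ ℓ₁ ℓ₂ : ℕ) (hℓ : ℓ = ℓ₁ * ℓ₂)
    (hcop : Nat.Coprime ℓ₁ (Λ.relIndex (dualLattice B ΛR)))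
    (A : (Fin n → ℚ) →+ (Fin n → ℚ))
    (hA1 : Λ.map A = Λ ⊓ smulLat ℓ₂ (dualLattice B ΛR))
    (hA2 : ΛR.map A = ΛR ⊓ smulLat ℓ₂ (dualLattice B Λ)) :
    Λ.map ((DistribMulAction.toAddMonoidHom (Fin n → ℚ) ((ℓ₁ : ℚ))).comp A)
        = Λ ⊓ smulLat ℓ (dualLattice B ΛR) ∧
    ΛR.map ((DistribMulAction.toAddMonoidHom (Fin n → ℚ) ((ℓ₁ : ℚ))).comp A)
        = ΛR ⊓ smulLat ℓ (dualLattice B Λ) := by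
  have hsymm : BilinForm.IsSymm B := ⟨hBsymm⟩
  have hnd : B.Nondegenerate := hsymm.isRefl.nondegenerate_iff_separatingLeft.mpr hBnd
  have hmΛ : ∀ z ∈ dualLattice B ΛR, Λ.relIndex (dualLattice B ΛR) • z ∈ Λ :=
    fun _ hz => Λ.nsmul_relIndex_mem hz
  have hmΛR : ∀ z ∈ dualLattice B Λ, Λ.relIndex (dualLattice B ΛR) • z ∈ ΛR := fun _ hz =>
    (dualLattice_dualLattice hsymm hnd hΛR).le (nsmul_mem_dualLattice hmΛ hz)
  rw [← AddSubgroup.map_map, ← AddSubgroup.map_map, hA1, hA2, hℓ]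
  exact ⟨map_nsmul_inf_smulLat hcop hmΛ, map_nsmul_inf_smulLat hcop hmΛR⟩

/-- if `A` is a centralizer transfer map for `ℓ₂` and
`gcd(ℓ₁, [Λ_R^B : Λ]) = 1`, then `ℓ₁·A` is a centralizer transfer map for
`ℓ = ℓ₁·ℓ₂`. -/
theorem stmt3 {n : ℕ} (hn : 1 ≤ n)
    (B : (Fin n → ℚ) →ₗ[ℚ] (Fin n → ℚ) →ₗ[ℚ] ℚ)
    (hBsymm : ∀ x y, B x y = B y x)
    (hBnd : ∀ x, (∀ y, B x y = 0) → x = 0)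
    (ΛR Λ : AddSubgroup (Fin n → ℚ))
    (hΛR : IsLattice ΛR) (hΛ : IsLattice Λ) (hsub : ΛR ≤ Λ)
    (hint : ∀ lam ∈ Λ, ∀ α ∈ ΛR, ∃ k : ℤ, B lam α = (k : ℚ))
    (ℓ ℓ₁ ℓ₂ : ℕ) (hℓ₁ : 1 ≤ ℓ₁) (hℓ₂ : 1 ≤ ℓ₂) (hℓ : ℓ = ℓ₁ * ℓ₂)
    (hcop : Nat.Coprime ℓ₁ (Λ.relIndex (dualLattice B ΛR)))
    (A : (Fin n → ℚ) →+ (Fin n → ℚ))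
    (hAmem : ∀ x ∈ Λ, A x ∈ Λ)
    (hA1 : Λ.map A = Λ ⊓ smulLat ℓ₂ (dualLattice B ΛR))
    (hA2 : ΛR.map A = ΛR ⊓ smulLat ℓ₂ (dualLattice B Λ)) :
    Λ.map ((DistribMulAction.toAddMonoidHom (Fin n → ℚ) ((ℓ₁ : ℚ))).comp A)
        = Λ ⊓ smulLat ℓ (dualLattice B ΛR) ∧
    ΛR.map ((DistribMulAction.toAddMonoidHom (Fin n → ℚ) ((ℓ₁ : ℚ))).comp A)
        = ΛR ⊓ smulLat ℓ (dualLattice B Λ) :=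
  stmt3_general B hBsymm hBnd ΛR Λ hΛR ℓ ℓ₁ ℓ₂ hℓ hcop A hA1 hA2
end

section
/- Let n ≥ 1, let B be a nondegenerate symmetric ℚ-bilinear form on ℚⁿ, let ℓ ≥ 1 be an integer, and write e(x) := exp(2πi·x) for x ∈ ℚ. Let Λ_R ⊆ Λ₁ and Λ_R ⊆ Λ₂ be lattices in ℚⁿ such that Λ' := Λ_R ∩ ℓ·Λ₁^B = Λ_R ∩ ℓ·Λ₂^B, let g: Λ₁ × Λ₂ → ℂˣ be biadditive and invariant under translation by Λ_R in each argument, and let A: Λ₂ → Λ₂ be a centralizer transfer map, i.e., A(Λ₂) = Λ₂ ∩ ℓ·Λ_R^B and A(Λ R) = Λ_R ∩ ℓ·Λ₂^B. Define Cent^g := {λ ∈ Λ₁ : e(B(λ,μ)/ℓ) = g(λ,μ) for all μ ∈ Λ₂} and let a_g^ℓ: (Λ₁/Λ_R) × (Λ₂/Λ_R) → ℂˣ be the well-defined map induced by (λ,μ) ↦ e(−B(λ,A(μ))/ℓ)·g(λ,A(μ)). Then the composite map Cent^g ↪ Λ₁ → Λ₁/Λ_R has kernel exactly Λ' and image exactly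 the left radical {λ̄ ∈ Λ₁/Λ_R : a_g^ℓ(λ̄,μ̄) = 1 for all μ̄ ∈ Λ₂/Λ_R}; in particular it induces a group isomorphism Cent^g/Λ' ≅ Rad(a_g^ℓ). -/
/-- `e(x) = exp(2πi·x)`. -/
noncomputable def ee (x : ℚ) : ℂ := Complex.exp (2 * Real.pi * Complex.I * (x : ℂ))

open Function

namespace AddChar

variable {G H R : Type*} [AddCommGroup G] [AddCommGroup H] [CommMonoid R]

def flipHom (ψ : G →+ AddChar H R) : H →+ AddChar G R where
  toFun b :=
    { toFun := fun a => ψ a b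
      map_zero_eq_one' := by simp
      map_add_eq_mul' := fun a a' => by simp }
  map_zero' := by ext; simp
  map_add' b b' := by ext; simp [map_add_eq_mul]

@[simp] lemma flipHom_apply_apply (ψ : G →+ AddChar H R) (a : G) (b : H) :
    flipHom ψ b a = ψ a b := rfl

def liftQuotient {N : AddSubgroup H} (χ : AddChar H R) (hχ : ∀ b ∈ N, χ b = 1) :
    AddChar (H ⧸ N) R :=
  toAddMonoidHomEquiv.symm <| QuotientAddGroup.lift N (toAddMonoidHomEquiv χ) fun b hb => by
    simp [hχ b hb]

@[simp] lemma liftQuotient_mk {N : AddSubgroup H} (χ : AddChar H R) (hχ : ∀ b ∈ N, χ b = 1)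
    (b : H) : liftQuotient χ hχ (b : H ⧸ N) = χ b := rfl

def kerLift₂ (ψ : G →+ AddChar H R) : G ⧸ ψ.ker →+ AddChar (H ⧸ (flipHom ψ).ker) R :=
  QuotientAddGroup.lift ψ.ker
    { toFun := fun a => liftQuotient (ψ a) fun b hb => DFunLike.congr_fun hb a
      map_zero' := by ext b; induction b using QuotientAddGroup.induction_on; simp
      map_add' := fun a a' => by
        ext b; induction b using QuotientAddGroup.induction_on with | H b => ?_
        show ψ (a + a') b = ψ a b * ψ a' b
        simp }
    fun a ha => by
      ext b; induction b using QuotientAddGroup.induction_on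
      simp [AddMonoidHom.mem_ker.1 ha]

@[simp] lemma kerLift₂_mk_mk (ψ : G →+ AddChar H R) (a : G) (b : H) :
    kerLift₂ ψ a b = ψ a b := rfl

lemma kerLift₂_injective (ψ : G →+ AddChar H R) : Injective (kerLift₂ ψ) := by
  refine (injective_iff_map_eq_zero _).2 fun x hx => ?_
  induction x using QuotientAddGroup.induction_on with | H a => ?_
  refine (QuotientAddGroup.eq_zero_iff a).2 (AddMonoidHom.mem_ker.2 (ext _ _ fun b => ?_))
  simpa using DFunLike.congr_fun hx (b : H ⧸ (flipHom ψ).ker)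

theorem surjective_of_injective [Finite G] [Finite H] {Φ : G → AddChar H ℂ} (hΦ : Injective Φ)
    {Ψ : H → AddChar G ℂ} (hΨ : Injective Ψ) : Surjective Φ := by
  cases nonempty_fintype G
  cases nonempty_fintype H
  have hGH := Fintype.card_le_of_injective Φ hΦ
  have hHG := Fintype.card_le_of_injective Ψ hΨ
  rw [card_eq] at hGH hHG
  exact ((Fintype.bijective_iff_injective_and_card Φ).2 ⟨hΦ, by rw [card_eq]; omega⟩).2

theorem exists_eq_of_finite_quotient_ker (ψ : G →+ AddChar H ℂ) [Finite (G ⧸ ψ.ker)]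
    [Finite (H ⧸ (flipHom ψ).ker)] (χ : AddChar H ℂ) (hχ : ∀ b ∈ (flipHom ψ).ker, χ b = 1) :
    ∃ a, ψ a = χ := by
  obtain ⟨x, hx⟩ := surjective_of_injective (kerLift₂_injective ψ)
    (kerLift₂_injective (flipHom ψ)) (liftQuotient χ hχ)
  induction x using QuotientAddGroup.induction_on with | H a => ?_
  exact ⟨a, ext _ _ fun b => by simpa using DFunLike.congr_fun hx (b : H ⧸ (flipHom ψ).ker)⟩

end AddChar

lemma ee_zero : ee 0 = 1 := by simp [ee]

lemma ee_add (x y : ℚ) : ee (x + y) = ee x * ee y := by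
  simp [ee, mul_add, Complex.exp_add]

lemma ee_neg (x : ℚ) : ee (-x) = (ee x)⁻¹ := by
  simp [ee, ← Complex.exp_neg]

lemma ee_ne_zero (x : ℚ) : ee x ≠ 0 := Complex.exp_ne_zero _

lemma ee_eq_one_iff {x : ℚ} : ee x = 1 ↔ ∃ k : ℤ, x = k := by
  have h2πi : 2 * Real.pi * Complex.I ≠ 0 := by simp [Real.pi_ne_zero]
  simp only [ee, Complex.exp_eq_one_iff]
  refine exists_congr fun k => ?_
  rw [mul_comm, mul_left_inj' h2πi]
  exact_mod_cast Iff.rfl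

lemma ee_intCast (k : ℤ) : ee k = 1 := ee_eq_one_iff.2 ⟨k, rfl⟩

lemma AddSubgroup.FG.exists_mul_map_eq_intCast {G : Type*} [AddGroup G] {L : AddSubgroup G}
    (hL : L.FG) (f : G →+ ℚ) : ∃ D : ℕ, D ≠ 0 ∧ ∀ y ∈ L, ∃ k : ℤ, D * f y = k := by
  obtain ⟨s, rfl⟩ := hL
  refine ⟨∏ y ∈ s, (f y).den, Finset.prod_ne_zero_iff.2 fun y _ => (f y).den_ne_zero, ?_⟩
  intro y hy
  suffices AddSubgroup.closure (s : Set G) ≤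
      ((Int.castAddHom ℚ).range.comap ((∏ y ∈ s, (f y).den : ℕ) • f)) by
    obtain ⟨k, hk⟩ := this hy
    exact ⟨k, by simpa using hk.symm⟩
  refine (AddSubgroup.closure_le _).2 fun y hy => ?_
  obtain ⟨m, hm⟩ := Finset.dvd_prod_of_mem (fun y => (f y).den) hy
  refine ⟨m * (f y).num, ?_⟩
  simp [hm, mul_comm, mul_left_comm]

section

variable {n : ℕ} {B : (Fin n → ℚ) →ₗ[ℚ] (Fin n → ℚ) →ₗ[ℚ] ℚ} {ℓ : ℕ}

lemma IsLattice.fg {L : AddSubgroup (Fin n → ℚ)} (hL : IsLattice L) : L.FG := by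
  obtain ⟨b, rfl⟩ := hL
  classical
  exact ⟨Finset.univ.image b, by simp⟩

lemma mem_smulLat_iff (hℓ : ℓ ≠ 0) {L : AddSubgroup (Fin n → ℚ)} {x : Fin n → ℚ} :
    x ∈ smulLat ℓ L ↔ (ℓ : ℚ)⁻¹ • x ∈ L := by
  have hℓ' : (ℓ : ℚ) ≠ 0 := by exact_mod_cast hℓ
  constructor
  · rintro ⟨w, hw, rfl⟩
    simpa [smul_smul, hℓ'] using hw
  · exact fun hx => ⟨_, hx, by simp [smul_smul, hℓ']⟩

lemma mem_smulLat_dualLattice_iff (hℓ : ℓ ≠ 0) {L : AddSubgroup (Fin n → ℚ)}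
    {x : Fin n → ℚ} : x ∈ smulLat ℓ (dualLattice B L) ↔ ∀ y ∈ L, ee (B x y / ℓ) = 1 := by
  rw [mem_smulLat_iff hℓ]
  refine forall₂_congr fun y _ => ?_
  rw [ee_eq_one_iff, map_smul, LinearMap.smul_apply, smul_eq_mul, inv_mul_eq_div]

variable (B ℓ) in
noncomputable def ePairing (L L' : AddSubgroup (Fin n → ℚ)) : L →+ AddChar L' ℂ where
  toFun a :=
    { toFun := fun b => ee (B a b / ℓ)
      map_zero_eq_one' := by simp [ee_zero]
      map_add_eq_mul' := fun b b' => by simp [add_div, ee_add] }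
  map_zero' := by ext; simp [ee_zero]
  map_add' a a' := by ext; simp [add_div, ee_add]

@[simp] lemma ePairing_apply_apply {L L' : AddSubgroup (Fin n → ℚ)} (a : L) (b : L') :
    ePairing B ℓ L L' a b = ee (B a b / ℓ) := rfl

lemma flipHom_ePairing (hBsymm : ∀ x y, B x y = B y x) {L L' : AddSubgroup (Fin n → ℚ)} :
    AddChar.flipHom (ePairing B ℓ L L') = ePairing B ℓ L' L := by
  ext b a
  simp [hBsymm]

lemma mem_ker_ePairing (hℓ : ℓ ≠ 0) {L L' : AddSubgroup (Fin n → ℚ)} {a : L} :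
    a ∈ (ePairing B ℓ L L').ker ↔ (a : Fin n → ℚ) ∈ smulLat ℓ (dualLattice B L') := by
  simp [mem_smulLat_dualLattice_iff hℓ, AddChar.eq_zero_iff]

lemma finite_quotient_ker_ePairing (hℓ : ℓ ≠ 0) {L L' : AddSubgroup (Fin n → ℚ)} (hL : L.FG)
    (hL' : L'.FG) : Finite (L ⧸ (ePairing B ℓ L L').ker) := by
  have : AddGroup.FG L := (AddGroup.fg_iff_addSubgroup_fg L).2 hL
  refine AddCommGroup.finite_of_fg_isAddTorsion _ fun x => ?_
  induction x using QuotientAddGroup.induction_on with | H a => ?_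
  obtain ⟨D, hD, hDa⟩ := hL'.exists_mul_map_eq_intCast (B a).toAddMonoidHom
  refine isOfFinAddOrder_iff_nsmul_eq_zero.2 ⟨ℓ * D, by positivity, ?_⟩
  rw [← QuotientAddGroup.mk_nsmul, QuotientAddGroup.eq_zero_iff, mem_ker_ePairing hℓ,
    mem_smulLat_dualLattice_iff hℓ]
  intro y hy
  obtain ⟨k, hk⟩ := hDa y hy
  have hℓ' : (ℓ : ℚ) ≠ 0 := by exact_mod_cast hℓ
  rw [AddSubgroup.coe_nsmul, ← Nat.cast_smul_eq_nsmul ℚ, map_smul, LinearMap.smul_apply,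
    smul_eq_mul, Nat.cast_mul, mul_assoc, mul_div_cancel_left₀ _ hℓ',
    show (D : ℚ) * B a y = k from hk]
  exact ee_intCast k

theorem exists_mem_forall_ee_eq (hBsymm : ∀ x y, B x y = B y x) (hℓ : ℓ ≠ 0)
    {L L' : AddSubgroup (Fin n → ℚ)} (hL : L.FG) (hL' : L'.FG) (χ : AddChar L' ℂ)
    (hχ : ∀ b : L', (b : Fin n → ℚ) ∈ smulLat ℓ (dualLattice B L) → χ b = 1) :
    ∃ a ∈ L, ∀ b : L', ee (B a b / ℓ) = χ b := by
  have := finite_quotient_ker_ePairing (B := B) hℓ hL hL'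
  have : Finite (L' ⧸ (AddChar.flipHom (ePairing B ℓ L L')).ker) := by
    rw [flipHom_ePairing hBsymm]
    exact finite_quotient_ker_ePairing hℓ hL' hL
  obtain ⟨a, ha⟩ := AddChar.exists_eq_of_finite_quotient_ker (ePairing B ℓ L L') χ fun b hb => by
    rw [flipHom_ePairing hBsymm, mem_ker_ePairing hℓ] at hb
    exact hχ b hb
  exact ⟨a, a.2, fun b => DFunLike.congr_fun ha b⟩

variable {g : (Fin n → ℚ) → (Fin n → ℚ) → ℂˣ} {ΛR Λ₁ Λ₂ : AddSubgroup (Fin n → ℚ)}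

variable (B ℓ g Λ₁ Λ₂) in
def twistedCent : Set (Fin n → ℚ) :=
  {lam | lam ∈ Λ₁ ∧ ∀ μ ∈ Λ₂, ee (B lam μ / ℓ) = (g lam μ : ℂ)}

variable (B ℓ g) in
noncomputable def twistedPairing (lam ν : Fin n → ℚ) : ℂ := ee (-(B lam ν) / ℓ) * g lam ν

lemma twistedCent_inter_eq (hℓ : ℓ ≠ 0) (hsub₁ : ΛR ≤ Λ₁)
    (hgR : ∀ α ∈ ΛR, ∀ μ ∈ Λ₂, g α μ = 1) :
    twistedCent B ℓ g Λ₁ Λ₂ ∩ ΛR = (ΛR ⊓ smulLat ℓ (dualLattice B Λ₂) : AddSubgroup _) := by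
  ext x
  simp only [twistedCent, Set.mem_inter_iff, SetLike.mem_coe,
    AddSubgroup.mem_inf, mem_smulLat_dualLattice_iff hℓ]
  constructor
  · rintro ⟨⟨-, hx⟩, hxR⟩
    exact ⟨hxR, fun μ hμ => by rw [hx μ hμ, hgR x hxR μ hμ, Units.val_one]⟩
  · rintro ⟨hxR, hx⟩
    exact ⟨⟨hsub₁ hxR, fun μ hμ => by rw [hx μ hμ, hgR x hxR μ hμ, Units.val_one]⟩, hxR⟩

lemma twistedPairing_eq_one_of_sub_mem (hBsymm : ∀ x y, B x y = B y x) (hℓ : ℓ ≠ 0)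
    (hginv1 : ∀ lam μ α, lam ∈ Λ₁ → μ ∈ Λ₂ → α ∈ ΛR → g (lam + α) μ = g lam μ)
    {lam c ν : Fin n → ℚ} (hc : c ∈ twistedCent B ℓ g Λ₁ Λ₂) (hlc : lam - c ∈ ΛR)
    (hν : ν ∈ Λ₂ ⊓ smulLat ℓ (dualLattice B ΛR)) : twistedPairing B ℓ g lam ν = 1 := by
  obtain ⟨hν₂, hνR⟩ := hν
  have hg : g lam ν = g c ν := by simpa using hginv1 c ν (lam - c) hc.1 hν₂ hlc
  have hB : ee (B (lam - c) ν / ℓ) = 1 := by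
    rw [hBsymm]
    exact (mem_smulLat_dualLattice_iff hℓ).1 hνR _ hlc
  have hsplit : -(B lam ν) / ℓ + B c ν / ℓ = -(B (lam - c) ν / ℓ) := by
    simp only [map_sub, LinearMap.sub_apply]
    ring
  rw [twistedPairing, hg, ← hc.2 ν hν₂, ← ee_add, hsplit, ee_neg, hB, inv_one]

lemma exists_twistedCent_sub_mem (hBsymm : ∀ x y, B x y = B y x) (hℓ : ℓ ≠ 0)
    (hΛR : ΛR.FG) (hΛ₂ : Λ₂.FG) (hsub₁ : ΛR ≤ Λ₁)
    (hg2 : ∀ lam μ μ', lam ∈ Λ₁ → μ ∈ Λ₂ → μ' ∈ Λ₂ → g lam (μ + μ') = g lam μ * g lam μ')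
    (hginv1 : ∀ lam μ α, lam ∈ Λ₁ → μ ∈ Λ₂ → α ∈ ΛR → g (lam + α) μ = g lam μ)
    {lam : Fin n → ℚ} (hlam : lam ∈ Λ₁)
    (hrad : ∀ ν ∈ Λ₂ ⊓ smulLat ℓ (dualLattice B ΛR), twistedPairing B ℓ g lam ν = 1) :
    ∃ c ∈ twistedCent B ℓ g Λ₁ Λ₂, lam - c ∈ ΛR := by
  let χ : AddChar Λ₂ ℂ :=
    { toFun := fun μ => ee (B lam μ / ℓ) / g lam μ
      map_zero_eq_one' := by
        have h0 : g lam 0 = 1 := by simpa using hg2 lam 0 0 hlam (zero_mem _) (zero_mem _)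
        simp [h0, ee_zero]
      map_add_eq_mul' := fun μ μ' => by
        simp [hg2 lam μ μ' hlam μ.2 μ'.2, add_div, ee_add, div_mul_div_comm] }
  obtain ⟨α, hαR, hα⟩ := exists_mem_forall_ee_eq hBsymm hℓ hΛR hΛ₂ χ fun ν hν => by
    have := hrad ν ⟨ν.2, hν⟩
    rw [twistedPairing, neg_div, ee_neg, inv_mul_eq_one₀ (ee_ne_zero _)] at this
    simp [χ, ← this, ee_ne_zero]
  have hlα : lam - α ∈ Λ₁ := sub_mem hlam (hsub₁ hαR)
  refine ⟨lam - α, ⟨hlα, fun μ hμ => ?_⟩, by simpa using hαR⟩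
  have hg : g (lam - α) μ = g lam μ := by simpa using (hginv1 (lam - α) μ α hlα hμ hαR).symm
  rw [hg, map_sub, LinearMap.sub_apply, sub_div, sub_eq_add_neg, ee_add, ee_neg, hα ⟨μ, hμ⟩]
  simp [χ, mul_div_cancel₀ _ (ee_ne_zero _)]

end

theorem stmt5_general {n : ℕ}
    (B : (Fin n → ℚ) →ₗ[ℚ] (Fin n → ℚ) →ₗ[ℚ] ℚ)
    (hBsymm : ∀ x y, B x y = B y x)
    (ℓ : ℕ) (hℓ : 1 ≤ ℓ)
    (ΛR Λ₁ Λ₂ : AddSubgroup (Fin n → ℚ))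
    (hΛR : IsLattice ΛR) (hΛ₂ : IsLattice Λ₂)
    (hsub₁ : ΛR ≤ Λ₁)
    (hΛ' : ΛR ⊓ smulLat ℓ (dualLattice B Λ₁) = ΛR ⊓ smulLat ℓ (dualLattice B Λ₂))
    (g : (Fin n → ℚ) → (Fin n → ℚ) → ℂˣ)
    (hg1 : ∀ lam lam' μ, lam ∈ Λ₁ → lam' ∈ Λ₁ → μ ∈ Λ₂ →
      g (lam + lam') μ = g lam μ * g lam' μ)
    (hg2 : ∀ lam μ μ', lam ∈ Λ₁ → μ ∈ Λ₂ → μ' ∈ Λ₂ →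
      g lam (μ + μ') = g lam μ * g lam μ')
    (hginv1 : ∀ lam μ α, lam ∈ Λ₁ → μ ∈ Λ₂ → α ∈ ΛR → g (lam + α) μ = g lam μ)
    (A : (Fin n → ℚ) →+ (Fin n → ℚ))
    (hA1 : Λ₂.map A = Λ₂ ⊓ smulLat ℓ (dualLattice B ΛR)) :
    -- kernel of `Cent^g ↪ Λ₁ → Λ₁/Λ_R` is exactly `Λ'`:
    ((({lam | lam ∈ Λ₁ ∧ ∀ μ ∈ Λ₂, ee (B lam μ / ℓ) = (g lam μ : ℂ)} : Set (Fin n → ℚ))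
        ∩ (ΛR : Set (Fin n → ℚ)))
      = ((ΛR ⊓ smulLat ℓ (dualLattice B Λ₁) : AddSubgroup (Fin n → ℚ)) : Set (Fin n → ℚ))) ∧
    -- image in `Λ₁/Λ_R` is exactly the left radical of `a_g^ℓ`:
    (∀ lam ∈ Λ₁,
      ((∃ c, (c ∈ Λ₁ ∧ ∀ μ ∈ Λ₂, ee (B c μ / ℓ) = (g c μ : ℂ)) ∧ lam - c ∈ ΛR)
        ↔ (∀ μ ∈ Λ₂, ee (-(B lam (A μ)) / ℓ) * (g lam (A μ) : ℂ) = 1))) := by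
  have hℓ0 : ℓ ≠ 0 := by omega
  have hgR : ∀ α ∈ ΛR, ∀ μ ∈ Λ₂, g α μ = 1 := fun α hα μ hμ => by
    have h0 : g 0 μ = 1 := by simpa using hg1 0 0 μ (zero_mem _) (zero_mem _) hμ
    simpa [h0] using hginv1 0 μ α (zero_mem _) hμ hα
  have hrad_iff : ∀ lam, (∀ μ ∈ Λ₂, twistedPairing B ℓ g lam (A μ) = 1) ↔
      ∀ ν ∈ Λ₂ ⊓ smulLat ℓ (dualLattice B ΛR), twistedPairing B ℓ g lam ν = 1 := fun lam => by
    simp [← hA1, AddSubgroup.mem_map]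
  refine ⟨?_, fun lam hlam => ⟨?_, fun hrad => ?_⟩⟩
  · rw [hΛ']
    exact twistedCent_inter_eq hℓ0 hsub₁ hgR
  · rintro ⟨c, hc, hlc⟩
    exact (hrad_iff lam).2 fun ν hν =>
      twistedPairing_eq_one_of_sub_mem hBsymm hℓ0 hginv1 hc hlc hν
  · exact exists_twistedCent_sub_mem hBsymm hℓ0 hΛR.fg hΛ₂.fg hsub₁ hg2 hginv1 hlam
      ((hrad_iff lam).1 hrad)

/-- the composite `Cent^g ↪ Λ₁ → Λ₁/Λ_R` has kernel exactly
`Λ' = Λ_R ∩ ℓ·Λ₁^B` and image exactly the left radical of `a_g^ℓ`;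
stated element-wise: `Cent^g ∩ Λ_R = Λ'`, and for `λ ∈ Λ₁` the class
`λ + Λ_R` meets `Cent^g` iff `a_g^ℓ(λ̄,μ̄) = 1` for all `μ̄`. -/
theorem stmt5 {n : ℕ} (hn : 1 ≤ n)
    (B : (Fin n → ℚ) →ₗ[ℚ] (Fin n → ℚ) →ₗ[ℚ] ℚ)
    (hBsymm : ∀ x y, B x y = B y x)
    (hBnd : ∀ x, (∀ y, B x y = 0) → x = 0)
    (ℓ : ℕ) (hℓ : 1 ≤ ℓ)
    (ΛR Λ₁ Λ₂ : AddSubgroup (Fin n → ℚ))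
    (hΛR : IsLattice ΛR) (hΛ₁ : IsLattice Λ₁) (hΛ₂ : IsLattice Λ₂)
    (hsub₁ : ΛR ≤ Λ₁) (hsub₂ : ΛR ≤ Λ₂)
    (hΛ' : ΛR ⊓ smulLat ℓ (dualLattice B Λ₁) = ΛR ⊓ smulLat ℓ (dualLattice B Λ₂))
    (g : (Fin n → ℚ) → (Fin n → ℚ) → ℂˣ)
    (hg1 : ∀ lam lam' μ, lam ∈ Λ₁ → lam' ∈ Λ₁ → μ ∈ Λ₂ →
      g (lam + lam') μ = g lam μ * g lam' μ)
    (hg2 : ∀ lam μ μ', lam ∈ Λ₁ → μ ∈ Λ₂ → μ' ∈ Λ₂ →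
      g lam (μ + μ') = g lam μ * g lam μ')
    (hginv1 : ∀ lam μ α, lam ∈ Λ₁ → μ ∈ Λ₂ → α ∈ ΛR → g (lam + α) μ = g lam μ)
    (hginv2 : ∀ lam μ α, lam ∈ Λ₁ → μ ∈ Λ₂ → α ∈ ΛR → g lam (μ + α) = g lam μ)
    (A : (Fin n → ℚ) →+ (Fin n → ℚ))
    (hA1 : Λ₂.map A = Λ₂ ⊓ smulLat ℓ (dualLattice B ΛR))
    (hA2 : ΛR.map A = ΛR ⊓ smulLat ℓ (dualLattice B Λ₂)) :
    -- kernel of `Cent^g ↪ Λ₁ → Λ₁/Λ_R` is exactly `Λ'`: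
    ((({lam | lam ∈ Λ₁ ∧ ∀ μ ∈ Λ₂, ee (B lam μ / ℓ) = (g lam μ : ℂ)} : Set (Fin n → ℚ))
        ∩ (ΛR : Set (Fin n → ℚ)))
      = ((ΛR ⊓ smulLat ℓ (dualLattice B Λ₁) : AddSubgroup (Fin n → ℚ)) : Set (Fin n → ℚ))) ∧
    -- image in `Λ₁/Λ_R` is exactly the left radical of `a_g^ℓ`:
    (∀ lam ∈ Λ₁,
      ((∃ c, (c ∈ Λ₁ ∧ ∀ μ ∈ Λ₂, ee (B c μ / ℓ) = (g c μ : ℂ)) ∧ lam - c ∈ ΛR)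
        ↔ (∀ μ ∈ Λ₂, ee (-(B lam (A μ)) / ℓ) * (g lam (A μ) : ℂ) = 1))) :=
  stmt5_general B hBsymm ℓ hℓ ΛR Λ₁ Λ₂ hΛR hΛ₂ hsub₁ hΛ' g hg1 hg2 hginv1 A hA1
end
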